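/- (Theorem 2, causal Mermin inequality.) Let P be a probability distribution over the eighteen binary variables (a1,a2,a3,b1,b2,b3,c1,c2,c3,x1,x2,y1,y2,z1,z2,λ_A,λ_B,λ_C), writing x⃗=(x1,x2), y⃗=(y1,y2), z⃗=(z1,z2), 𝟎=(0,0), 𝟏=(1,1). Suppose P satisfies: (i) P(x⃗,y⃗,z⃗) > 0 for all values of the inputs; (ii) definite causal order: a1 ⫫_P x2 | (x1, λ_A=0) and a2 ⫫_P x1 | (x2, λ_A=1), and the analogous conditions for (b1,b2,y1,y2,λ_B) and (c1,c2,z1,z2,λ_C); (iii) relativistic causality: (λ_A,λ_B,λ_C) ⫫_P (x⃗,y⃗,z⃗), (λ_A,b3,c3) ⫫_P x⃗ | (y⃗,z⃗), (a3,λ_B,c3) ⫫_P y⃗ | (x⃗,z⃗), (a3,b3,λ_C) ⫫_P z⃗ | (x⃗,y⃗); (iv) (a1,a2,λ_A) ⫫_P (y⃗,z⃗) | x⃗, (b1,b2,λ_B) ⫫_P (x⃗,z⃗) | y⃗, (c1,c2,λ_C) ⫫_P (x⃗,y⃗) | z⃗. Then P(a1⊕b1⊕c1=0 | x⃗=𝟏,y⃗=𝟏,z⃗=𝟏)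 + P(a1⊕b3⊕c3=1 | x⃗=𝟏,y⃗=𝟎,z⃗=𝟎) + P(a3⊕b1⊕c3=1 | x⃗=𝟎,y⃗=𝟏,z⃗=𝟎) + P(a3⊕b3⊕c1=1 | x⃗=𝟎,y⃗=𝟎,z⃗=𝟏) − 2[P(a1=1 | x1x2=10) + P(a2=1 | x1x2=01) + P(a1=a2=0 | x1x2=11) + P(b1=1 | y1y2=10) + P(b2=1 | y1y2=01) + P(b1=b2=0 | y1y2=11) + P(c1=1 | z1z2=10) + P(c2=1 | z1z2=01) + P(c1=c2=0 | z1z2=11)] ≤ 3, where ⊕ denotes addition mod 2 and the conditional probabilities in the bracket are independent of the omitted input variables by (iv). -/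

import Mathlib

/-!
Replace the measured bits `a1`, `b1`, `c1` in the four Mermin terms by the causal-order
variables `λ_A`, `λ_B`, `λ_C`, paying each time the probability of the mismatch `a1 ≠ λ_A`
(resp. `b1 ≠ λ_B`, `c1 ≠ λ_C`); every mismatch is paid in two of the terms. Relativistic
causality moves the four substituted terms to the single input `x⃗ = y⃗ = z⃗ = 𝟎`, where their
events cannot hold simultaneously (every bit occurs twice, yet the parities add up to `1`), so
they sum to at most `3`. By (iv) the mismatch probability of `A` only depends on `x⃗`, and at
`x⃗ = 𝟏` the definite causal order bounds it by the bracket: `a1 = 1, λ_A = 0` does not see `x2`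
and costs `P(a1 = 1 | x⃗ = 10)`; `a1 = 0, λ_A = 1` forces `a1 = a2 = 0` or `a2 = 1, λ_A = 1`, and
the latter does not see `x1` and costs `P(a2 = 1 | x⃗ = 01)`.
-/

set_option synthInstance.maxSize 100000
set_option maxHeartbeats 1000000

/-- The nine binary outcome variables. -/
structure Outcome where
  a1 : Bool
  a2 : Bool
  a3 : Bool
  b1 : Bool
  b2 : Bool
  b3 : Bool
  c1 : Bool
  c2 : Bool
  c3 : Bool
deriving DecidableEq, Fintype

/-- The six binary input variables `x⃗ = (x1,x2)`, `y⃗ = (y1,y2)`, `z⃗ = (z1,z2)`. -/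
structure Inputs where
  x1 : Bool
  x2 : Bool
  y1 : Bool
  y2 : Bool
  z1 : Bool
  z2 : Bool
deriving DecidableEq, Fintype

/-- The three binary hidden causal order variables `λ_A, λ_B, λ_C`. -/
structure Lams where
  lA : Bool
  lB : Bool
  lC : Bool
deriving DecidableEq, Fintype

/-- The probability of the event `E` under the distribution `P`. -/
def pr (P : Outcome → Inputs → Lams → ℝ) (E : Outcome → Inputs → Lams → Prop)
    [∀ o i l, Decidable (E o i l)] : ℝ :=
  ∑ o : Outcome, ∑ i : Inputs, ∑ l : Lams, if E o i l then P o i l else 0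

/-- The conditional probability `P(E | F) = P(E ∧ F) / P(F)`. -/
noncomputable def cpr (P : Outcome → Inputs → Lams → ℝ) (E F : Outcome → Inputs → Lams → Prop)
    [∀ o i l, Decidable (E o i l)] [∀ o i l, Decidable (F o i l)] : ℝ :=
  pr P (fun o i l => E o i l ∧ F o i l) / pr P F

attribute [ext] Inputs

abbrev Event : Type := Outcome → Inputs → Lams → Prop

section Pr

variable (P : Outcome → Inputs → Lams → ℝ)

lemma pr_nonneg (hnn : ∀ o i l, 0 ≤ P o i l) (E : Event) [∀ o i l, Decidable (E o i l)] :
    0 ≤ pr P E :=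
  Finset.sum_nonneg fun o _ => Finset.sum_nonneg fun i _ => Finset.sum_nonneg fun l _ => by
    split_ifs <;> simp [hnn]

lemma pr_congr {E F : Event} [∀ o i l, Decidable (E o i l)] [∀ o i l, Decidable (F o i l)]
    (h : ∀ o i l, E o i l ↔ F o i l) : pr P E = pr P F := by
  simp only [pr, h]

lemma pr_mono (hnn : ∀ o i l, 0 ≤ P o i l) {E F : Event}
    [∀ o i l, Decidable (E o i l)] [∀ o i l, Decidable (F o i l)]
    (h : ∀ o i l, E o i l → F o i l) : pr P E ≤ pr P F := by
  unfold pr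
  gcongr with o _ i _ l _
  split_ifs <;> simp_all

lemma pr_le_add (hnn : ∀ o i l, 0 ≤ P o i l) {E F G : Event}
    [∀ o i l, Decidable (E o i l)] [∀ o i l, Decidable (F o i l)] [∀ o i l, Decidable (G o i l)]
    (h : ∀ o i l, E o i l → F o i l ∨ G o i l) : pr P E ≤ pr P F + pr P G := by
  simp only [pr, ← Finset.sum_add_distrib]
  gcongr with o _ i _ l _
  have := hnn o i l
  have := h o i l
  split_ifs <;> simp_all

lemma pr_comp_and_eq_sum {α : Type*} [Fintype α] [DecidableEq α]
    (f : Outcome → Inputs → Lams → α) (E : α → Prop) [DecidablePred E]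
    (C : Event) [∀ o i l, Decidable (C o i l)] :
    pr P (fun o i l => E (f o i l) ∧ C o i l)
      = ∑ a with E a, pr P (fun o i l => f o i l = a ∧ C o i l) := by
  simp only [pr]
  symm
  rw [Finset.sum_comm]
  refine Finset.sum_congr rfl fun o _ => ?_
  rw [Finset.sum_comm]
  refine Finset.sum_congr rfl fun i _ => ?_
  rw [Finset.sum_comm]
  refine Finset.sum_congr rfl fun l _ => ?_
  simp [ite_and, Finset.sum_ite_eq]

lemma pr_comp_eq_sum {α : Type*} [Fintype α] [DecidableEq α]
    (f : Outcome → Inputs → Lams → α) (E : α → Prop) [DecidablePred E] :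
    pr P (fun o i l => E (f o i l)) = ∑ a with E a, pr P (fun o i l => f o i l = a) := by
  simpa only [and_true] using pr_comp_and_eq_sum P f E fun _ _ _ => True

lemma pr_input_event_pos (hnn : ∀ o i l, 0 ≤ P o i l)
    (hin : ∀ s : Inputs, 0 < pr P (fun _ i _ => i = s)) {F : Inputs → Prop} [DecidablePred F]
    (s : Inputs) (hs : F s) : 0 < pr P (fun _ i _ => F i) :=
  (hin s).trans_le (pr_mono P hnn fun _ _ _ h => h ▸ hs)

end Pr

section Cpr

variable (P : Outcome → Inputs → Lams → ℝ)

lemma cpr_congr {E E' C C' : Event}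
    [∀ o i l, Decidable (E o i l)] [∀ o i l, Decidable (E' o i l)]
    [∀ o i l, Decidable (C o i l)] [∀ o i l, Decidable (C' o i l)]
    (hE : ∀ o i l, E o i l ↔ E' o i l) (hC : ∀ o i l, C o i l ↔ C' o i l) :
    cpr P E C = cpr P E' C' := by
  rw [cpr, cpr, pr_congr P fun o i l => and_congr (hE o i l) (hC o i l), pr_congr P hC]

lemma cpr_mono (hnn : ∀ o i l, 0 ≤ P o i l) {E F C : Event}
    [∀ o i l, Decidable (E o i l)] [∀ o i l, Decidable (F o i l)] [∀ o i l, Decidable (C o i l)]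
    (h : ∀ o i l, E o i l → F o i l) : cpr P E C ≤ cpr P F C :=
  div_le_div_of_nonneg_right (pr_mono P hnn fun o i l hE => ⟨h o i l hE.1, hE.2⟩)
    (pr_nonneg P hnn C)

lemma cpr_le_add (hnn : ∀ o i l, 0 ≤ P o i l) {E F G C : Event}
    [∀ o i l, Decidable (E o i l)] [∀ o i l, Decidable (F o i l)]
    [∀ o i l, Decidable (G o i l)] [∀ o i l, Decidable (C o i l)]
    (h : ∀ o i l, E o i l → F o i l ∨ G o i l) : cpr P E C ≤ cpr P F C + cpr P G C := by
  rw [cpr, cpr, cpr, ← add_div]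
  refine div_le_div_of_nonneg_right (pr_le_add P hnn fun o i l hE => ?_) (pr_nonneg P hnn C)
  exact (h o i l hE.1).imp (⟨·, hE.2⟩) (⟨·, hE.2⟩)

lemma cpr_le_cpr_add_cpr_ne {α : Type*} [DecidableEq α] (hnn : ∀ o i l, 0 ≤ P o i l)
    (Φ : α → Event) [∀ a o i l, Decidable (Φ a o i l)] (F G : Outcome → Inputs → Lams → α)
    (C : Event) [∀ o i l, Decidable (C o i l)] :
    cpr P (fun o i l => Φ (F o i l) o i l) C
      ≤ cpr P (fun o i l => Φ (G o i l) o i l) C + cpr P (fun o i l => F o i l ≠ G o i l) C :=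
  cpr_le_add P hnn fun o i l h => by
    by_cases hFG : F o i l = G o i l
    · exact .inl (hFG ▸ h)
    · exact .inr hFG

lemma cpr_add_four_le_three (hnn : ∀ o i l, 0 ≤ P o i l) {F₁ F₂ F₃ F₄ C : Event}
    [∀ o i l, Decidable (F₁ o i l)] [∀ o i l, Decidable (F₂ o i l)]
    [∀ o i l, Decidable (F₃ o i l)] [∀ o i l, Decidable (F₄ o i l)]
    [∀ o i l, Decidable (C o i l)]
    (h : ∀ o i l, ¬(F₁ o i l ∧ F₂ o i l ∧ F₃ o i l ∧ F₄ o i l)) :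
    cpr P F₁ C + cpr P F₂ C + cpr P F₃ C + cpr P F₄ C ≤ 3 := by
  simp only [cpr, ← add_div]
  refine div_le_of_le_mul₀ (pr_nonneg P hnn C) zero_le_three ?_
  simp only [pr, ← Finset.sum_add_distrib, Finset.mul_sum]
  gcongr with o _ i _ l _
  have := hnn o i l
  have := h o i l
  split_ifs <;> first | linarith | tauto

end Cpr

section Independence

variable (P : Outcome → Inputs → Lams → ℝ)

def LamIndep : Prop :=
  ∀ (lv : Lams) (iv : Inputs),
    pr P (fun _ i l => l = lv ∧ i = iv) = pr P (fun _ _ l => l = lv) * pr P (fun _ i _ => i = iv)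

/-- `f ⫫ (x⃗, y⃗, z⃗) | c(x⃗, y⃗, z⃗)`. -/
def CondIndepInputs {α γ : Type*} [DecidableEq α] [DecidableEq γ]
    (f : Outcome → Inputs → Lams → α) (c : Inputs → γ) : Prop :=
  ∀ (a : α) (s : Inputs),
    pr P (fun o i l => f o i l = a ∧ i = s) * pr P (fun _ i _ => c i = c s)
      = pr P (fun o i l => f o i l = a ∧ c i = c s) * pr P (fun _ i _ => i = s)

variable {P}

lemma LamIndep.pr_and (h : LamIndep P) (E : Lams → Prop) [DecidablePred E]
    (F : Inputs → Prop) [DecidablePred F] :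
    pr P (fun _ i l => E l ∧ F i) = pr P (fun _ _ l => E l) * pr P (fun _ i _ => F i) := by
  rw [pr_comp_and_eq_sum P (fun _ _ l => l) E, pr_comp_eq_sum P (fun _ _ l => l) E,
    pr_comp_eq_sum P (fun _ i _ => i) F, Finset.sum_mul]
  refine Finset.sum_congr rfl fun lv _ => ?_
  rw [pr_congr P fun _ _ _ => and_comm, pr_comp_and_eq_sum P (fun _ i _ => i) F, Finset.mul_sum]
  refine Finset.sum_congr rfl fun iv _ => ?_
  rw [pr_congr P fun _ _ _ => and_comm]
  exact h lv iv

lemma LamIndep.cpr_eq (h : LamIndep P) (E : Lams → Prop) [DecidablePred E] {s : Inputs}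
    (hs : 0 < pr P (fun _ i _ => i = s)) :
    cpr P (fun _ _ l => E l) (fun _ i _ => i = s) = pr P (fun _ _ l => E l) := by
  rw [cpr, h.pr_and E (· = s), mul_div_cancel_right₀ _ hs.ne']

namespace CondIndepInputs

variable {α γ : Type*} [Fintype α] [DecidableEq α] [DecidableEq γ]
  {f : Outcome → Inputs → Lams → α} {c : Inputs → γ}

lemma pr_comp (h : CondIndepInputs P f c) (E : α → Prop) [DecidablePred E] (s : Inputs) :
    pr P (fun o i l => E (f o i l) ∧ i = s) * pr P (fun _ i _ => c i = c s)
      = pr P (fun o i l => E (f o i l) ∧ c i = c s) * pr P (fun _ i _ => i = s) := by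
  rw [pr_comp_and_eq_sum P f E, pr_comp_and_eq_sum P f E, Finset.sum_mul, Finset.sum_mul]
  exact Finset.sum_congr rfl fun a _ => h a s

lemma cpr_eq (h : CondIndepInputs P f c) (hnn : ∀ o i l, 0 ≤ P o i l)
    (E : α → Prop) [DecidablePred E] {s : Inputs} (hs : 0 < pr P (fun _ i _ => i = s)) :
    cpr P (fun o i l => E (f o i l)) (fun _ i _ => i = s)
      = cpr P (fun o i l => E (f o i l)) (fun _ i _ => c i = c s) := by
  have hc : 0 < pr P (fun _ i _ => c i = c s) :=
    hs.trans_le (pr_mono P hnn fun _ _ _ hi => congrArg c hi)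
  rw [cpr, cpr, div_eq_div_iff hs.ne' hc.ne']
  exact h.pr_comp E s

lemma cpr_eq_of_eq (h : CondIndepInputs P f c) (hnn : ∀ o i l, 0 ≤ P o i l)
    (E : α → Prop) [DecidablePred E] {s s' : Inputs} (hs : 0 < pr P (fun _ i _ => i = s))
    (hs' : 0 < pr P (fun _ i _ => i = s')) (hcs : c s = c s') :
    cpr P (fun o i l => E (f o i l)) (fun _ i _ => i = s)
      = cpr P (fun o i l => E (f o i l)) (fun _ i _ => i = s') := by
  rw [h.cpr_eq hnn E hs, h.cpr_eq hnn E hs', hcs]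

lemma cpr_ne_eq (hnn : ∀ o i l, 0 ≤ P o i l)
    {A1 A2 : Outcome → Bool} {X1 X2 : Inputs → Bool} {L : Lams → Bool}
    (h : CondIndepInputs P (fun o _ l => (A1 o, A2 o, L l)) fun i => (X1 i, X2 i))
    {s : Inputs} (hs : 0 < pr P (fun _ i _ => i = s)) :
    cpr P (fun o _ l => A1 o ≠ L l) (fun _ i _ => i = s)
      = cpr P (fun o _ l => A1 o ≠ L l) (fun _ i _ => X1 i = X1 s ∧ X2 i = X2 s) :=
  (h.cpr_eq hnn (fun a => a.1 ≠ a.2.2) hs).trans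
    (cpr_congr P (fun _ _ _ => Iff.rfl) fun _ _ _ => Prod.ext_iff)

end CondIndepInputs

end Independence

section CausalOrder

variable (P : Outcome → Inputs → Lams → ℝ)

def DefiniteCausalOrder (A1 A2 : Outcome → Bool) (X1 X2 : Inputs → Bool) (L : Lams → Bool) :
    Prop :=
  (∀ a1v x2v x1v : Bool,
      pr P (fun o i l => A1 o = a1v ∧ X2 i = x2v ∧ X1 i = x1v ∧ L l = false)
          * pr P (fun _ i l => X1 i = x1v ∧ L l = false)
        = pr P (fun o i l => A1 o = a1v ∧ X1 i = x1v ∧ L l = false)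
          * pr P (fun _ i l => X2 i = x2v ∧ X1 i = x1v ∧ L l = false)) ∧
    ∀ a2v x1v x2v : Bool,
      pr P (fun o i l => A2 o = a2v ∧ X1 i = x1v ∧ X2 i = x2v ∧ L l = true)
          * pr P (fun _ i l => X2 i = x2v ∧ L l = true)
        = pr P (fun o i l => A2 o = a2v ∧ X2 i = x2v ∧ L l = true)
          * pr P (fun _ i l => X1 i = x1v ∧ X2 i = x2v ∧ L l = true)

variable {P}

lemma cpr_and_lam_eq_of_condIndep (hnn : ∀ o i l, 0 ≤ P o i l) (hlam : LamIndep P)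
    (A : Outcome → Bool) (U V : Inputs → Bool) (L : Lams → Bool) (w : Bool)
    (hci : ∀ v : Bool,
      pr P (fun o i l => A o = true ∧ V i = v ∧ U i = true ∧ L l = w)
          * pr P (fun _ i l => U i = true ∧ L l = w)
        = pr P (fun o i l => A o = true ∧ U i = true ∧ L l = w)
          * pr P (fun _ i l => V i = v ∧ U i = true ∧ L l = w))
    (hpos : ∀ v : Bool, 0 < pr P (fun _ i _ => U i = true ∧ V i = v)) (v v' : Bool) :
    cpr P (fun o _ l => A o = true ∧ L l = w) (fun _ i _ => U i = true ∧ V i = v)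
      = cpr P (fun o _ l => A o = true ∧ L l = w) (fun _ i _ => U i = true ∧ V i = v') := by
  set N := pr P (fun _ i l => U i = true ∧ L l = w)
  have hnum : ∀ v : Bool,
      pr P (fun o i l => (A o = true ∧ L l = w) ∧ U i = true ∧ V i = v)
        = pr P (fun o i l => A o = true ∧ V i = v ∧ U i = true ∧ L l = w) :=
    fun v => pr_congr P fun _ _ _ => by tauto
  rcases (pr_nonneg P hnn fun _ i l => U i = true ∧ L l = w).eq_or_lt with hN | hN
  · have hzero : ∀ v : Bool,
        cpr P (fun o _ l => A o = true ∧ L l = w) (fun _ i _ => U i = true ∧ V i = v) = 0 := by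
      intro v
      rw [cpr, hnum, le_antisymm (hN ▸ pr_mono P hnn fun _ _ _ h => h.2.2) (pr_nonneg P hnn _),
        zero_div]
    rw [hzero, hzero]
  · -- both sides equal `P(A, U, L = w) P(L = w) / P(U, L = w)`
    have hfac : ∀ v : Bool, pr P (fun _ i l => V i = v ∧ U i = true ∧ L l = w)
        = pr P (fun _ _ l => L l = w) * pr P (fun _ i _ => U i = true ∧ V i = v) := fun v => by
      rw [← hlam.pr_and]
      exact pr_congr P fun _ _ _ => by tauto
    have key : ∀ v : Bool,
        cpr P (fun o _ l => A o = true ∧ L l = w) (fun _ i _ => U i = true ∧ V i = v) * N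
          = pr P (fun o i l => A o = true ∧ U i = true ∧ L l = w)
            * pr P (fun _ _ l => L l = w) := by
      intro v
      rw [cpr, hnum, div_mul_eq_mul_div, hci v, hfac v, div_eq_iff (hpos v).ne']
      ring
    exact mul_right_cancel₀ hN.ne' ((key v).trans (key v').symm)

lemma cpr_ne_lam_le (hnn : ∀ o i l, 0 ≤ P o i l) (hlam : LamIndep P)
    {A1 A2 : Outcome → Bool} {X1 X2 : Inputs → Bool} {L : Lams → Bool}
    (hord : DefiniteCausalOrder P A1 A2 X1 X2 L)
    (hpos : ∀ u v : Bool, 0 < pr P (fun _ i _ => X1 i = u ∧ X2 i = v)) :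
    cpr P (fun o _ l => A1 o ≠ L l) (fun _ i _ => X1 i = true ∧ X2 i = true)
      ≤ cpr P (fun o _ _ => A1 o = true) (fun _ i _ => X1 i = true ∧ X2 i = false)
        + cpr P (fun o _ _ => A2 o = true) (fun _ i _ => X1 i = false ∧ X2 i = true)
        + cpr P (fun o _ _ => A1 o = false ∧ A2 o = false)
            (fun _ i _ => X1 i = true ∧ X2 i = true) := by
  have hshift₁ := cpr_and_lam_eq_of_condIndep hnn hlam A1 X1 X2 L false (hord.1 true · true)
    (hpos true) true false
  have hshift₂ : cpr P (fun o _ l => A2 o = true ∧ L l = true)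
        (fun _ i _ => X1 i = true ∧ X2 i = true)
      = cpr P (fun o _ l => A2 o = true ∧ L l = true) (fun _ i _ => X1 i = false ∧ X2 i = true) :=
    (cpr_congr P (fun _ _ _ => Iff.rfl) fun _ _ _ => and_comm).trans <|
      (cpr_and_lam_eq_of_condIndep hnn hlam A2 X2 X1 L true (hord.2 true · true)
        (fun v => (hpos v true).trans_eq (pr_congr P fun _ _ _ => and_comm)) true false).trans
      (cpr_congr P (fun _ _ _ => Iff.rfl) fun _ _ _ => and_comm)
  calc cpr P (fun o _ l => A1 o ≠ L l) (fun _ i _ => X1 i = true ∧ X2 i = true)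
      ≤ cpr P (fun o _ l => A1 o = true ∧ L l = false) (fun _ i _ => X1 i = true ∧ X2 i = true)
        + cpr P (fun o _ l => (A2 o = true ∧ L l = true) ∨ (A1 o = false ∧ A2 o = false))
            (fun _ i _ => X1 i = true ∧ X2 i = true) :=
        cpr_le_add P hnn fun o _ l => by cases A1 o <;> cases A2 o <;> cases L l <;> simp
    _ ≤ cpr P (fun o _ l => A1 o = true ∧ L l = false) (fun _ i _ => X1 i = true ∧ X2 i = false)
        + (cpr P (fun o _ l => A2 o = true ∧ L l = true) (fun _ i _ => X1 i = false ∧ X2 i = true)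
          + cpr P (fun o _ _ => A1 o = false ∧ A2 o = false)
            (fun _ i _ => X1 i = true ∧ X2 i = true)) := by
        rw [hshift₁, ← hshift₂]
        gcongr
        exact cpr_le_add P hnn fun _ _ _ h => h
    _ ≤ _ := by
        have := cpr_mono P hnn (C := fun _ i _ => X1 i = true ∧ X2 i = false)
          fun o _ l (h : A1 o = true ∧ L l = false) => h.1
        have := cpr_mono P hnn (C := fun _ i _ => X1 i = false ∧ X2 i = true)
          fun o _ l (h : A2 o = true ∧ L l = true) => h.1
        linarith

end CausalOrder

section Mermin

variable {P : Outcome → Inputs → Lams → ℝ}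

lemma mermin_le_lam_add (hnn : ∀ o i l, 0 ≤ P o i l) (C₁ C₂ C₃ C₄ : Event)
    [∀ o i l, Decidable (C₁ o i l)] [∀ o i l, Decidable (C₂ o i l)]
    [∀ o i l, Decidable (C₃ o i l)] [∀ o i l, Decidable (C₄ o i l)] :
    cpr P (fun o _ _ => Bool.xor o.a1 (Bool.xor o.b1 o.c1) = false) C₁
        + cpr P (fun o _ _ => Bool.xor o.a1 (Bool.xor o.b3 o.c3) = true) C₂
        + cpr P (fun o _ _ => Bool.xor o.a3 (Bool.xor o.b1 o.c3) = true) C₃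
        + cpr P (fun o _ _ => Bool.xor o.a3 (Bool.xor o.b3 o.c1) = true) C₄
      ≤ cpr P (fun _ _ l => Bool.xor l.lA (Bool.xor l.lB l.lC) = false) C₁
        + cpr P (fun o _ l => Bool.xor l.lA (Bool.xor o.b3 o.c3) = true) C₂
        + cpr P (fun o _ l => Bool.xor o.a3 (Bool.xor l.lB o.c3) = true) C₃
        + cpr P (fun o _ l => Bool.xor o.a3 (Bool.xor o.b3 l.lC) = true) C₄
        + (cpr P (fun o _ l => o.a1 ≠ l.lA) C₁ + cpr P (fun o _ l => o.a1 ≠ l.lA) C₂)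
        + (cpr P (fun o _ l => o.b1 ≠ l.lB) C₁ + cpr P (fun o _ l => o.b1 ≠ l.lB) C₃)
        + (cpr P (fun o _ l => o.c1 ≠ l.lC) C₁ + cpr P (fun o _ l => o.c1 ≠ l.lC) C₄) := by
  have h₁ := cpr_le_cpr_add_cpr_ne P hnn (fun x o _ _ => Bool.xor x (Bool.xor o.b1 o.c1) = false)
    (fun o _ _ => o.a1) (fun _ _ l => l.lA) C₁
  have h₁' := cpr_le_cpr_add_cpr_ne P hnn (fun x o _ l => Bool.xor l.lA (Bool.xor x o.c1) = false)
    (fun o _ _ => o.b1) (fun _ _ l => l.lB) C₁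
  have h₁'' := cpr_le_cpr_add_cpr_ne P hnn (fun x _ _ l => Bool.xor l.lA (Bool.xor l.lB x) = false)
    (fun o _ _ => o.c1) (fun _ _ l => l.lC) C₁
  have h₂ := cpr_le_cpr_add_cpr_ne P hnn (fun x o _ _ => Bool.xor x (Bool.xor o.b3 o.c3) = true)
    (fun o _ _ => o.a1) (fun _ _ l => l.lA) C₂
  have h₃ := cpr_le_cpr_add_cpr_ne P hnn (fun x o _ _ => Bool.xor o.a3 (Bool.xor x o.c3) = true)
    (fun o _ _ => o.b1) (fun _ _ l => l.lB) C₃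
  have h₄ := cpr_le_cpr_add_cpr_ne P hnn (fun x o _ _ => Bool.xor o.a3 (Bool.xor o.b3 x) = true)
    (fun o _ _ => o.c1) (fun _ _ l => l.lC) C₄
  linarith

lemma not_mermin_parities (a b c x y z : Bool) :
    ¬(Bool.xor x (Bool.xor y z) = false ∧ Bool.xor x (Bool.xor b c) = true ∧
      Bool.xor a (Bool.xor y c) = true ∧ Bool.xor a (Bool.xor b z) = true) := by
  revert a b c x y z
  decide

lemma lam_mermin_le_three (hnn : ∀ o i l, 0 ≤ P o i l) (hlam : LamIndep P)
    (hX : CondIndepInputs P (fun o _ l => (l.lA, o.b3, o.c3)) fun i => (i.y1, i.y2, i.z1, i.z2))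
    (hY : CondIndepInputs P (fun o _ l => (o.a3, l.lB, o.c3)) fun i => (i.x1, i.x2, i.z1, i.z2))
    (hZ : CondIndepInputs P (fun o _ l => (o.a3, o.b3, l.lC)) fun i => (i.x1, i.x2, i.y1, i.y2))
    (hin : ∀ s : Inputs, 0 < pr P (fun _ i _ => i = s)) :
    cpr P (fun _ _ l => Bool.xor l.lA (Bool.xor l.lB l.lC) = false)
          (fun _ i _ => i = ⟨true, true, true, true, true, true⟩)
        + cpr P (fun o _ l => Bool.xor l.lA (Bool.xor o.b3 o.c3) = true)
          (fun _ i _ => i = ⟨true, true, false, false, false, false⟩)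
        + cpr P (fun o _ l => Bool.xor o.a3 (Bool.xor l.lB o.c3) = true)
          (fun _ i _ => i = ⟨false, false, true, true, false, false⟩)
        + cpr P (fun o _ l => Bool.xor o.a3 (Bool.xor o.b3 l.lC) = true)
          (fun _ i _ => i = ⟨false, false, false, false, true, true⟩) ≤ 3 := by
  let s₀ : Inputs := ⟨false, false, false, false, false, false⟩
  let E : Bool × Bool × Bool → Prop := fun a => Bool.xor a.1 (Bool.xor a.2.1 a.2.2) = true
  rw [hlam.cpr_eq _ (hin _), ← hlam.cpr_eq _ (hin s₀), hX.cpr_eq_of_eq hnn E (hin _) (hin s₀),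
    hY.cpr_eq_of_eq hnn E (hin _) (hin s₀), hZ.cpr_eq_of_eq hnn E (hin _) (hin s₀)]
  · exact cpr_add_four_le_three P hnn fun o _ l =>
      not_mermin_parities o.a3 o.b3 o.c3 l.lA l.lB l.lC
  all_goals rfl

lemma mermin_le_three_add (hnn : ∀ o i l, 0 ≤ P o i l) (hlam : LamIndep P)
    (hA : CondIndepInputs P (fun o _ l => (o.a1, o.a2, l.lA)) fun i => (i.x1, i.x2))
    (hB : CondIndepInputs P (fun o _ l => (o.b1, o.b2, l.lB)) fun i => (i.y1, i.y2))
    (hC : CondIndepInputs P (fun o _ l => (o.c1, o.c2, l.lC)) fun i => (i.z1, i.z2))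
    (hX : CondIndepInputs P (fun o _ l => (l.lA, o.b3, o.c3)) fun i => (i.y1, i.y2, i.z1, i.z2))
    (hY : CondIndepInputs P (fun o _ l => (o.a3, l.lB, o.c3)) fun i => (i.x1, i.x2, i.z1, i.z2))
    (hZ : CondIndepInputs P (fun o _ l => (o.a3, o.b3, l.lC)) fun i => (i.x1, i.x2, i.y1, i.y2))
    (hin : ∀ s : Inputs, 0 < pr P (fun _ i _ => i = s)) :
    cpr P (fun o _ _ => Bool.xor o.a1 (Bool.xor o.b1 o.c1) = false)
          (fun _ i _ => i = ⟨true, true, true, true, true, true⟩)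
        + cpr P (fun o _ _ => Bool.xor o.a1 (Bool.xor o.b3 o.c3) = true)
          (fun _ i _ => i = ⟨true, true, false, false, false, false⟩)
        + cpr P (fun o _ _ => Bool.xor o.a3 (Bool.xor o.b1 o.c3) = true)
          (fun _ i _ => i = ⟨false, false, true, true, false, false⟩)
        + cpr P (fun o _ _ => Bool.xor o.a3 (Bool.xor o.b3 o.c1) = true)
          (fun _ i _ => i = ⟨false, false, false, false, true, true⟩)
      ≤ 3 + 2 * (cpr P (fun o _ l => o.a1 ≠ l.lA) (fun _ i _ => i.x1 = true ∧ i.x2 = true)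
        + cpr P (fun o _ l => o.b1 ≠ l.lB) (fun _ i _ => i.y1 = true ∧ i.y2 = true)
        + cpr P (fun o _ l => o.c1 ≠ l.lC) (fun _ i _ => i.z1 = true ∧ i.z2 = true)) := by
  refine (mermin_le_lam_add hnn _ _ _ _).trans ?_
  rw [hA.cpr_ne_eq hnn (hin _), hA.cpr_ne_eq hnn (hin _), hB.cpr_ne_eq hnn (hin _),
    hB.cpr_ne_eq hnn (hin _), hC.cpr_ne_eq hnn (hin _), hC.cpr_ne_eq hnn (hin _)]
  linarith [lam_mermin_le_three hnn hlam hX hY hZ hin]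

end Mermin

theorem stmt6_general (P : Outcome → Inputs → Lams → ℝ)
    -- `P` is a probability distribution
    (hnn : ∀ o i l, 0 ≤ P o i l)
    -- (i) all inputs have positive probability
    (hin : ∀ iv : Inputs, 0 < pr P (fun _ i _ => i = iv))
    -- (ii) definite causal order
    (hA0 : ∀ a1v x2v x1v : Bool,
      pr P (fun o i l => o.a1 = a1v ∧ i.x2 = x2v ∧ i.x1 = x1v ∧ l.lA = false)
          * pr P (fun _ i l => i.x1 = x1v ∧ l.lA = false)
        = pr P (fun o i l => o.a1 = a1v ∧ i.x1 = x1v ∧ l.lA = false)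
          * pr P (fun _ i l => i.x2 = x2v ∧ i.x1 = x1v ∧ l.lA = false))
    (hA1 : ∀ a2v x1v x2v : Bool,
      pr P (fun o i l => o.a2 = a2v ∧ i.x1 = x1v ∧ i.x2 = x2v ∧ l.lA = true)
          * pr P (fun _ i l => i.x2 = x2v ∧ l.lA = true)
        = pr P (fun o i l => o.a2 = a2v ∧ i.x2 = x2v ∧ l.lA = true)
          * pr P (fun _ i l => i.x1 = x1v ∧ i.x2 = x2v ∧ l.lA = true))
    (hB0 : ∀ b1v y2v y1v : Bool,
      pr P (fun o i l => o.b1 = b1v ∧ i.y2 = y2v ∧ i.y1 = y1v ∧ l.lB = false)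
          * pr P (fun _ i l => i.y1 = y1v ∧ l.lB = false)
        = pr P (fun o i l => o.b1 = b1v ∧ i.y1 = y1v ∧ l.lB = false)
          * pr P (fun _ i l => i.y2 = y2v ∧ i.y1 = y1v ∧ l.lB = false))
    (hB1 : ∀ b2v y1v y2v : Bool,
      pr P (fun o i l => o.b2 = b2v ∧ i.y1 = y1v ∧ i.y2 = y2v ∧ l.lB = true)
          * pr P (fun _ i l => i.y2 = y2v ∧ l.lB = true)
        = pr P (fun o i l => o.b2 = b2v ∧ i.y2 = y2v ∧ l.lB = true)
          * pr P (fun _ i l => i.y1 = y1v ∧ i.y2 = y2v ∧ l.lB = true))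
    (hC0 : ∀ c1v z2v z1v : Bool,
      pr P (fun o i l => o.c1 = c1v ∧ i.z2 = z2v ∧ i.z1 = z1v ∧ l.lC = false)
          * pr P (fun _ i l => i.z1 = z1v ∧ l.lC = false)
        = pr P (fun o i l => o.c1 = c1v ∧ i.z1 = z1v ∧ l.lC = false)
          * pr P (fun _ i l => i.z2 = z2v ∧ i.z1 = z1v ∧ l.lC = false))
    (hC1 : ∀ c2v z1v z2v : Bool,
      pr P (fun o i l => o.c2 = c2v ∧ i.z1 = z1v ∧ i.z2 = z2v ∧ l.lC = true)
          * pr P (fun _ i l => i.z2 = z2v ∧ l.lC = true)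
        = pr P (fun o i l => o.c2 = c2v ∧ i.z2 = z2v ∧ l.lC = true)
          * pr P (fun _ i l => i.z1 = z1v ∧ i.z2 = z2v ∧ l.lC = true))
    -- (iii) relativistic causality: `(λ_A,λ_B,λ_C) ⫫ (x⃗,y⃗,z⃗)`
    (hRC0 : ∀ (lv : Lams) (iv : Inputs),
      pr P (fun _ i l => l = lv ∧ i = iv)
        = pr P (fun _ _ l => l = lv) * pr P (fun _ i _ => i = iv))
    -- `(λ_A, b3, c3) ⫫ x⃗ | (y⃗, z⃗)`
    (hRCx : ∀ lAv b3v c3v x1v x2v y1v y2v z1v z2v : Bool,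
      pr P (fun o i l => l.lA = lAv ∧ o.b3 = b3v ∧ o.c3 = c3v ∧
            i.x1 = x1v ∧ i.x2 = x2v ∧ i.y1 = y1v ∧ i.y2 = y2v ∧ i.z1 = z1v ∧ i.z2 = z2v)
          * pr P (fun _ i _ => i.y1 = y1v ∧ i.y2 = y2v ∧ i.z1 = z1v ∧ i.z2 = z2v)
        = pr P (fun o i l => l.lA = lAv ∧ o.b3 = b3v ∧ o.c3 = c3v ∧
            i.y1 = y1v ∧ i.y2 = y2v ∧ i.z1 = z1v ∧ i.z2 = z2v)
          * pr P (fun _ i _ => i.x1 = x1v ∧ i.x2 = x2v ∧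
            i.y1 = y1v ∧ i.y2 = y2v ∧ i.z1 = z1v ∧ i.z2 = z2v))
    -- `(a3, λ_B, c3) ⫫ y⃗ | (x⃗, z⃗)`
    (hRCy : ∀ a3v lBv c3v x1v x2v y1v y2v z1v z2v : Bool,
      pr P (fun o i l => o.a3 = a3v ∧ l.lB = lBv ∧ o.c3 = c3v ∧
            i.x1 = x1v ∧ i.x2 = x2v ∧ i.y1 = y1v ∧ i.y2 = y2v ∧ i.z1 = z1v ∧ i.z2 = z2v)
          * pr P (fun _ i _ => i.x1 = x1v ∧ i.x2 = x2v ∧ i.z1 = z1v ∧ i.z2 = z2v)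
        = pr P (fun o i l => o.a3 = a3v ∧ l.lB = lBv ∧ o.c3 = c3v ∧
            i.x1 = x1v ∧ i.x2 = x2v ∧ i.z1 = z1v ∧ i.z2 = z2v)
          * pr P (fun _ i _ => i.x1 = x1v ∧ i.x2 = x2v ∧
            i.y1 = y1v ∧ i.y2 = y2v ∧ i.z1 = z1v ∧ i.z2 = z2v))
    -- `(a3, b3, λ_C) ⫫ z⃗ | (x⃗, y⃗)`
    (hRCz : ∀ a3v b3v lCv x1v x2v y1v y2v z1v z2v : Bool,
      pr P (fun o i l => o.a3 = a3v ∧ o.b3 = b3v ∧ l.lC = lCv ∧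
            i.x1 = x1v ∧ i.x2 = x2v ∧ i.y1 = y1v ∧ i.y2 = y2v ∧ i.z1 = z1v ∧ i.z2 = z2v)
          * pr P (fun _ i _ => i.x1 = x1v ∧ i.x2 = x2v ∧ i.y1 = y1v ∧ i.y2 = y2v)
        = pr P (fun o i l => o.a3 = a3v ∧ o.b3 = b3v ∧ l.lC = lCv ∧
            i.x1 = x1v ∧ i.x2 = x2v ∧ i.y1 = y1v ∧ i.y2 = y2v)
          * pr P (fun _ i _ => i.x1 = x1v ∧ i.x2 = x2v ∧
            i.y1 = y1v ∧ i.y2 = y2v ∧ i.z1 = z1v ∧ i.z2 = z2v))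
    -- (iv) `(a1, a2, λ_A) ⫫ (y⃗, z⃗) | x⃗`
    (hExA : ∀ a1v a2v lAv x1v x2v y1v y2v z1v z2v : Bool,
      pr P (fun o i l => o.a1 = a1v ∧ o.a2 = a2v ∧ l.lA = lAv ∧
            i.x1 = x1v ∧ i.x2 = x2v ∧ i.y1 = y1v ∧ i.y2 = y2v ∧ i.z1 = z1v ∧ i.z2 = z2v)
          * pr P (fun _ i _ => i.x1 = x1v ∧ i.x2 = x2v)
        = pr P (fun o i l => o.a1 = a1v ∧ o.a2 = a2v ∧ l.lA = lAv ∧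
            i.x1 = x1v ∧ i.x2 = x2v)
          * pr P (fun _ i _ => i.x1 = x1v ∧ i.x2 = x2v ∧
            i.y1 = y1v ∧ i.y2 = y2v ∧ i.z1 = z1v ∧ i.z2 = z2v))
    -- `(b1, b2, λ_B) ⫫ (x⃗, z⃗) | y⃗`
    (hExB : ∀ b1v b2v lBv x1v x2v y1v y2v z1v z2v : Bool,
      pr P (fun o i l => o.b1 = b1v ∧ o.b2 = b2v ∧ l.lB = lBv ∧
            i.x1 = x1v ∧ i.x2 = x2v ∧ i.y1 = y1v ∧ i.y2 = y2v ∧ i.z1 = z1v ∧ i.z2 = z2v)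
          * pr P (fun _ i _ => i.y1 = y1v ∧ i.y2 = y2v)
        = pr P (fun o i l => o.b1 = b1v ∧ o.b2 = b2v ∧ l.lB = lBv ∧
            i.y1 = y1v ∧ i.y2 = y2v)
          * pr P (fun _ i _ => i.x1 = x1v ∧ i.x2 = x2v ∧
            i.y1 = y1v ∧ i.y2 = y2v ∧ i.z1 = z1v ∧ i.z2 = z2v))
    -- `(c1, c2, λ_C) ⫫ (x⃗, y⃗) | z⃗`
    (hExC : ∀ c1v c2v lCv x1v x2v y1v y2v z1v z2v : Bool,
      pr P (fun o i l => o.c1 = c1v ∧ o.c2 = c2v ∧ l.lC = lCv ∧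
            i.x1 = x1v ∧ i.x2 = x2v ∧ i.y1 = y1v ∧ i.y2 = y2v ∧ i.z1 = z1v ∧ i.z2 = z2v)
          * pr P (fun _ i _ => i.z1 = z1v ∧ i.z2 = z2v)
        = pr P (fun o i l => o.c1 = c1v ∧ o.c2 = c2v ∧ l.lC = lCv ∧
            i.z1 = z1v ∧ i.z2 = z2v)
          * pr P (fun _ i _ => i.x1 = x1v ∧ i.x2 = x2v ∧
            i.y1 = y1v ∧ i.y2 = y2v ∧ i.z1 = z1v ∧ i.z2 = z2v)) :
    -- the causal Mermin inequality
    cpr P (fun o _ _ => Bool.xor o.a1 (Bool.xor o.b1 o.c1) = false)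
        (fun _ i _ => i = ⟨true, true, true, true, true, true⟩)
      + cpr P (fun o _ _ => Bool.xor o.a1 (Bool.xor o.b3 o.c3) = true)
        (fun _ i _ => i = ⟨true, true, false, false, false, false⟩)
      + cpr P (fun o _ _ => Bool.xor o.a3 (Bool.xor o.b1 o.c3) = true)
        (fun _ i _ => i = ⟨false, false, true, true, false, false⟩)
      + cpr P (fun o _ _ => Bool.xor o.a3 (Bool.xor o.b3 o.c1) = true)
        (fun _ i _ => i = ⟨false, false, false, false, true, true⟩)
      - 2 * (cpr P (fun o _ _ => o.a1 = true) (fun _ i _ => i.x1 = true ∧ i.x2 = false)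
        + cpr P (fun o _ _ => o.a2 = true) (fun _ i _ => i.x1 = false ∧ i.x2 = true)
        + cpr P (fun o _ _ => o.a1 = false ∧ o.a2 = false)
            (fun _ i _ => i.x1 = true ∧ i.x2 = true)
        + cpr P (fun o _ _ => o.b1 = true) (fun _ i _ => i.y1 = true ∧ i.y2 = false)
        + cpr P (fun o _ _ => o.b2 = true) (fun _ i _ => i.y1 = false ∧ i.y2 = true)
        + cpr P (fun o _ _ => o.b1 = false ∧ o.b2 = false)
            (fun _ i _ => i.y1 = true ∧ i.y2 = true)
        + cpr P (fun o _ _ => o.c1 = true) (fun _ i _ => i.z1 = true ∧ i.z2 = false)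
        + cpr P (fun o _ _ => o.c2 = true) (fun _ i _ => i.z1 = false ∧ i.z2 = true)
        + cpr P (fun o _ _ => o.c1 = false ∧ o.c2 = false)
            (fun _ i _ => i.z1 = true ∧ i.z2 = true)) ≤ 3 := by
  have hA : CondIndepInputs P (fun o _ l => (o.a1, o.a2, l.lA)) fun i => (i.x1, i.x2) := by
    rintro ⟨a1, a2, lA⟩ ⟨x1, x2, y1, y2, z1, z2⟩
    simpa only [Prod.mk.injEq, Inputs.ext_iff, and_assoc] using hExA a1 a2 lA x1 x2 y1 y2 z1 z2
  have hB : CondIndepInputs P (fun o _ l => (o.b1, o.b2, l.lB)) fun i => (i.y1, i.y2) := by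
    rintro ⟨b1, b2, lB⟩ ⟨x1, x2, y1, y2, z1, z2⟩
    simpa only [Prod.mk.injEq, Inputs.ext_iff, and_assoc] using hExB b1 b2 lB x1 x2 y1 y2 z1 z2
  have hC : CondIndepInputs P (fun o _ l => (o.c1, o.c2, l.lC)) fun i => (i.z1, i.z2) := by
    rintro ⟨c1, c2, lC⟩ ⟨x1, x2, y1, y2, z1, z2⟩
    simpa only [Prod.mk.injEq, Inputs.ext_iff, and_assoc] using hExC c1 c2 lC x1 x2 y1 y2 z1 z2
  have hX : CondIndepInputs P (fun o _ l => (l.lA, o.b3, o.c3))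
      fun i => (i.y1, i.y2, i.z1, i.z2) := by
    rintro ⟨lA, b3, c3⟩ ⟨x1, x2, y1, y2, z1, z2⟩
    simpa only [Prod.mk.injEq, Inputs.ext_iff, and_assoc] using hRCx lA b3 c3 x1 x2 y1 y2 z1 z2
  have hY : CondIndepInputs P (fun o _ l => (o.a3, l.lB, o.c3))
      fun i => (i.x1, i.x2, i.z1, i.z2) := by
    rintro ⟨a3, lB, c3⟩ ⟨x1, x2, y1, y2, z1, z2⟩
    simpa only [Prod.mk.injEq, Inputs.ext_iff, and_assoc] using hRCy a3 lB c3 x1 x2 y1 y2 z1 z2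
  have hZ : CondIndepInputs P (fun o _ l => (o.a3, o.b3, l.lC))
      fun i => (i.x1, i.x2, i.y1, i.y2) := by
    rintro ⟨a3, b3, lC⟩ ⟨x1, x2, y1, y2, z1, z2⟩
    simpa only [Prod.mk.injEq, Inputs.ext_iff, and_assoc] using hRCz a3 b3 lC x1 x2 y1 y2 z1 z2
  linarith [mermin_le_three_add hnn hRC0 hA hB hC hX hY hZ hin,
    cpr_ne_lam_le hnn hRC0 ⟨hA0, hA1⟩ fun u v =>
      pr_input_event_pos P hnn hin ⟨u, v, u, v, u, v⟩ ⟨rfl, rfl⟩,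
    cpr_ne_lam_le hnn hRC0 ⟨hB0, hB1⟩ fun u v =>
      pr_input_event_pos P hnn hin ⟨u, v, u, v, u, v⟩ ⟨rfl, rfl⟩,
    cpr_ne_lam_le hnn hRC0 ⟨hC0, hC1⟩ fun u v =>
      pr_input_event_pos P hnn hin ⟨u, v, u, v, u, v⟩ ⟨rfl, rfl⟩]

/-- **Theorem 2: causal Mermin inequality.** -/
theorem stmt6 (P : Outcome → Inputs → Lams → ℝ)
    -- `P` is a probability distribution
    (hnn : ∀ o i l, 0 ≤ P o i l)
    (hsum : (∑ o : Outcome, ∑ i : Inputs, ∑ l : Lams, P o i l) = 1)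
    -- (i) all inputs have positive probability
    (hin : ∀ iv : Inputs, 0 < pr P (fun _ i _ => i = iv))
    -- (ii) definite causal order
    (hA0 : ∀ a1v x2v x1v : Bool,
      pr P (fun o i l => o.a1 = a1v ∧ i.x2 = x2v ∧ i.x1 = x1v ∧ l.lA = false)
          * pr P (fun _ i l => i.x1 = x1v ∧ l.lA = false)
        = pr P (fun o i l => o.a1 = a1v ∧ i.x1 = x1v ∧ l.lA = false)
          * pr P (fun _ i l => i.x2 = x2v ∧ i.x1 = x1v ∧ l.lA = false))
    (hA1 : ∀ a2v x1v x2v : Bool,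
      pr P (fun o i l => o.a2 = a2v ∧ i.x1 = x1v ∧ i.x2 = x2v ∧ l.lA = true)
          * pr P (fun _ i l => i.x2 = x2v ∧ l.lA = true)
        = pr P (fun o i l => o.a2 = a2v ∧ i.x2 = x2v ∧ l.lA = true)
          * pr P (fun _ i l => i.x1 = x1v ∧ i.x2 = x2v ∧ l.lA = true))
    (hB0 : ∀ b1v y2v y1v : Bool,
      pr P (fun o i l => o.b1 = b1v ∧ i.y2 = y2v ∧ i.y1 = y1v ∧ l.lB = false)
          * pr P (fun _ i l => i.y1 = y1v ∧ l.lB = false)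
        = pr P (fun o i l => o.b1 = b1v ∧ i.y1 = y1v ∧ l.lB = false)
          * pr P (fun _ i l => i.y2 = y2v ∧ i.y1 = y1v ∧ l.lB = false))
    (hB1 : ∀ b2v y1v y2v : Bool,
      pr P (fun o i l => o.b2 = b2v ∧ i.y1 = y1v ∧ i.y2 = y2v ∧ l.lB = true)
          * pr P (fun _ i l => i.y2 = y2v ∧ l.lB = true)
        = pr P (fun o i l => o.b2 = b2v ∧ i.y2 = y2v ∧ l.lB = true)
          * pr P (fun _ i l => i.y1 = y1v ∧ i.y2 = y2v ∧ l.lB = true))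
    (hC0 : ∀ c1v z2v z1v : Bool,
      pr P (fun o i l => o.c1 = c1v ∧ i.z2 = z2v ∧ i.z1 = z1v ∧ l.lC = false)
          * pr P (fun _ i l => i.z1 = z1v ∧ l.lC = false)
        = pr P (fun o i l => o.c1 = c1v ∧ i.z1 = z1v ∧ l.lC = false)
          * pr P (fun _ i l => i.z2 = z2v ∧ i.z1 = z1v ∧ l.lC = false))
    (hC1 : ∀ c2v z1v z2v : Bool,
      pr P (fun o i l => o.c2 = c2v ∧ i.z1 = z1v ∧ i.z2 = z2v ∧ l.lC = true)
          * pr P (fun _ i l => i.z2 = z2v ∧ l.lC = true)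
        = pr P (fun o i l => o.c2 = c2v ∧ i.z2 = z2v ∧ l.lC = true)
          * pr P (fun _ i l => i.z1 = z1v ∧ i.z2 = z2v ∧ l.lC = true))
    -- (iii) relativistic causality: `(λ_A,λ_B,λ_C) ⫫ (x⃗,y⃗,z⃗)`
    (hRC0 : ∀ (lv : Lams) (iv : Inputs),
      pr P (fun _ i l => l = lv ∧ i = iv)
        = pr P (fun _ _ l => l = lv) * pr P (fun _ i _ => i = iv))
    -- `(λ_A, b3, c3) ⫫ x⃗ | (y⃗, z⃗)`
    (hRCx : ∀ lAv b3v c3v x1v x2v y1v y2v z1v z2v : Bool,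
      pr P (fun o i l => l.lA = lAv ∧ o.b3 = b3v ∧ o.c3 = c3v ∧
            i.x1 = x1v ∧ i.x2 = x2v ∧ i.y1 = y1v ∧ i.y2 = y2v ∧ i.z1 = z1v ∧ i.z2 = z2v)
          * pr P (fun _ i _ => i.y1 = y1v ∧ i.y2 = y2v ∧ i.z1 = z1v ∧ i.z2 = z2v)
        = pr P (fun o i l => l.lA = lAv ∧ o.b3 = b3v ∧ o.c3 = c3v ∧
            i.y1 = y1v ∧ i.y2 = y2v ∧ i.z1 = z1v ∧ i.z2 = z2v)
          * pr P (fun _ i _ => i.x1 = x1v ∧ i.x2 = x2v ∧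
            i.y1 = y1v ∧ i.y2 = y2v ∧ i.z1 = z1v ∧ i.z2 = z2v))
    -- `(a3, λ_B, c3) ⫫ y⃗ | (x⃗, z⃗)`
    (hRCy : ∀ a3v lBv c3v x1v x2v y1v y2v z1v z2v : Bool,
      pr P (fun o i l => o.a3 = a3v ∧ l.lB = lBv ∧ o.c3 = c3v ∧
            i.x1 = x1v ∧ i.x2 = x2v ∧ i.y1 = y1v ∧ i.y2 = y2v ∧ i.z1 = z1v ∧ i.z2 = z2v)
          * pr P (fun _ i _ => i.x1 = x1v ∧ i.x2 = x2v ∧ i.z1 = z1v ∧ i.z2 = z2v)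
        = pr P (fun o i l => o.a3 = a3v ∧ l.lB = lBv ∧ o.c3 = c3v ∧
            i.x1 = x1v ∧ i.x2 = x2v ∧ i.z1 = z1v ∧ i.z2 = z2v)
          * pr P (fun _ i _ => i.x1 = x1v ∧ i.x2 = x2v ∧
            i.y1 = y1v ∧ i.y2 = y2v ∧ i.z1 = z1v ∧ i.z2 = z2v))
    -- `(a3, b3, λ_C) ⫫ z⃗ | (x⃗, y⃗)`
    (hRCz : ∀ a3v b3v lCv x1v x2v y1v y2v z1v z2v : Bool,
      pr P (fun o i l => o.a3 = a3v ∧ o.b3 = b3v ∧ l.lC = lCv ∧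
            i.x1 = x1v ∧ i.x2 = x2v ∧ i.y1 = y1v ∧ i.y2 = y2v ∧ i.z1 = z1v ∧ i.z2 = z2v)
          * pr P (fun _ i _ => i.x1 = x1v ∧ i.x2 = x2v ∧ i.y1 = y1v ∧ i.y2 = y2v)
        = pr P (fun o i l => o.a3 = a3v ∧ o.b3 = b3v ∧ l.lC = lCv ∧
            i.x1 = x1v ∧ i.x2 = x2v ∧ i.y1 = y1v ∧ i.y2 = y2v)
          * pr P (fun _ i _ => i.x1 = x1v ∧ i.x2 = x2v ∧
            i.y1 = y1v ∧ i.y2 = y2v ∧ i.z1 = z1v ∧ i.z2 = z2v))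
    -- (iv) `(a1, a2, λ_A) ⫫ (y⃗, z⃗) | x⃗`
    (hExA : ∀ a1v a2v lAv x1v x2v y1v y2v z1v z2v : Bool,
      pr P (fun o i l => o.a1 = a1v ∧ o.a2 = a2v ∧ l.lA = lAv ∧
            i.x1 = x1v ∧ i.x2 = x2v ∧ i.y1 = y1v ∧ i.y2 = y2v ∧ i.z1 = z1v ∧ i.z2 = z2v)
          * pr P (fun _ i _ => i.x1 = x1v ∧ i.x2 = x2v)
        = pr P (fun o i l => o.a1 = a1v ∧ o.a2 = a2v ∧ l.lA = lAv ∧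
            i.x1 = x1v ∧ i.x2 = x2v)
          * pr P (fun _ i _ => i.x1 = x1v ∧ i.x2 = x2v ∧
            i.y1 = y1v ∧ i.y2 = y2v ∧ i.z1 = z1v ∧ i.z2 = z2v))
    -- `(b1, b2, λ_B) ⫫ (x⃗, z⃗) | y⃗`
    (hExB : ∀ b1v b2v lBv x1v x2v y1v y2v z1v z2v : Bool,
      pr P (fun o i l => o.b1 = b1v ∧ o.b2 = b2v ∧ l.lB = lBv ∧
            i.x1 = x1v ∧ i.x2 = x2v ∧ i.y1 = y1v ∧ i.y2 = y2v ∧ i.z1 = z1v ∧ i.z2 = z2v)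
          * pr P (fun _ i _ => i.y1 = y1v ∧ i.y2 = y2v)
        = pr P (fun o i l => o.b1 = b1v ∧ o.b2 = b2v ∧ l.lB = lBv ∧
            i.y1 = y1v ∧ i.y2 = y2v)
          * pr P (fun _ i _ => i.x1 = x1v ∧ i.x2 = x2v ∧
            i.y1 = y1v ∧ i.y2 = y2v ∧ i.z1 = z1v ∧ i.z2 = z2v))
    -- `(c1, c2, λ_C) ⫫ (x⃗, y⃗) | z⃗`
    (hExC : ∀ c1v c2v lCv x1v x2v y1v y2v z1v z2v : Bool,
      pr P (fun o i l => o.c1 = c1v ∧ o.c2 = c2v ∧ l.lC = lCv ∧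
            i.x1 = x1v ∧ i.x2 = x2v ∧ i.y1 = y1v ∧ i.y2 = y2v ∧ i.z1 = z1v ∧ i.z2 = z2v)
          * pr P (fun _ i _ => i.z1 = z1v ∧ i.z2 = z2v)
        = pr P (fun o i l => o.c1 = c1v ∧ o.c2 = c2v ∧ l.lC = lCv ∧
            i.z1 = z1v ∧ i.z2 = z2v)
          * pr P (fun _ i _ => i.x1 = x1v ∧ i.x2 = x2v ∧
            i.y1 = y1v ∧ i.y2 = y2v ∧ i.z1 = z1v ∧ i.z2 = z2v)) :
    -- the causal Mermin inequality
    cpr P (fun o _ _ => Bool.xor o.a1 (Bool.xor o.b1 o.c1) = false)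
        (fun _ i _ => i = ⟨true, true, true, true, true, true⟩)
      + cpr P (fun o _ _ => Bool.xor o.a1 (Bool.xor o.b3 o.c3) = true)
        (fun _ i _ => i = ⟨true, true, false, false, false, false⟩)
      + cpr P (fun o _ _ => Bool.xor o.a3 (Bool.xor o.b1 o.c3) = true)
        (fun _ i _ => i = ⟨false, false, true, true, false, false⟩)
      + cpr P (fun o _ _ => Bool.xor o.a3 (Bool.xor o.b3 o.c1) = true)
        (fun _ i _ => i = ⟨false, false, false, false, true, true⟩)
      - 2 * (cpr P (fun o _ _ => o.a1 = true) (fun _ i _ => i.x1 = true ∧ i.x2 = false)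
        + cpr P (fun o _ _ => o.a2 = true) (fun _ i _ => i.x1 = false ∧ i.x2 = true)
        + cpr P (fun o _ _ => o.a1 = false ∧ o.a2 = false)
            (fun _ i _ => i.x1 = true ∧ i.x2 = true)
        + cpr P (fun o _ _ => o.b1 = true) (fun _ i _ => i.y1 = true ∧ i.y2 = false)
        + cpr P (fun o _ _ => o.b2 = true) (fun _ i _ => i.y1 = false ∧ i.y2 = true)
        + cpr P (fun o _ _ => o.b1 = false ∧ o.b2 = false)
            (fun _ i _ => i.y1 = true ∧ i.y2 = true)
        + cpr P (fun o _ _ => o.c1 = true) (fun _ i _ => i.z1 = true ∧ i.z2 = false)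
        + cpr P (fun o _ _ => o.c2 = true) (fun _ i _ => i.z1 = false ∧ i.z2 = true)
        + cpr P (fun o _ _ => o.c1 = false ∧ o.c2 = false)
            (fun _ i _ => i.z1 = true ∧ i.z2 = true)) ≤ 3 :=
  stmt6_general P hnn hin hA0 hA1 hB0 hB1 hC0 hC1 hRC0 hRCx hRCy hRCz hExA hExB hExC
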